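/- arXiv:2110.12718 — 3 statements merged into one kernel-verified Lean document; each statement's English description precedes it below -/
import Mathlib

section
/- Let 𝔞 be an ideal of a commutative noetherian ring R and M an R-module such that Hom_R(R/𝔞, M) is artinian. Then for every finitely generated R-module N with Supp_R N ⊆ V(𝔞), the R-module Hom_R(N, M) is artinian. -/
/-!
STATEMENT 4: Let 𝔞 be an ideal of a commutative noetherian ring R and M an R-module such
that Hom_R(R/𝔞, M) is artinian. Then for every finitely generated R-module N with
Supp_R N ⊆ V(𝔞), the R-module Hom_R(N, M) is artinian.
-/

universe u

open LinearMap Submodule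

/-- The `𝔞`-torsion of `M` is artinian if `Hom(R/𝔞, M)` is. -/
lemma torsionBySet_artinian {R : Type u} [CommRing R] (𝔞 : Ideal R)
    (M : Type u) [AddCommGroup M] [Module R M]
    (h : IsArtinian R ((R ⧸ 𝔞) →ₗ[R] M)) :
    IsArtinian R (Submodule.torsionBySet R M (𝔞 : Set R)) := by
  let f : Submodule.torsionBySet R M (𝔞 : Set R) →ₗ[R] ((R ⧸ 𝔞) →ₗ[R] M) :=
    { toFun := fun m => Submodule.liftQ 𝔞 (LinearMap.toSpanSingleton R M m.1)
        (fun a ha => by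
          simpa using (Submodule.mem_torsionBySet_iff _ _).mp m.2 ⟨a, ha⟩)
      map_add' := fun x y => LinearMap.ext fun z => by
        obtain ⟨r, rfl⟩ := Submodule.Quotient.mk_surjective 𝔞 z
        exact smul_add r (x : M) (y : M)
      map_smul' := fun c x => LinearMap.ext fun z => by
        obtain ⟨r, rfl⟩ := Submodule.Quotient.mk_surjective 𝔞 z
        exact smul_comm r c (x : M) }
  have hf : Function.Injective f := by
    intro x y hxy
    have h1 := LinearMap.congr_fun hxy (Submodule.Quotient.mk 1)
    simp only [f, LinearMap.coe_mk, AddHom.coe_mk, Submodule.liftQ_apply,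
      toSpanSingleton_apply, one_smul] at h1
    exact Subtype.ext h1
  exact isArtinian_of_injective f hf

/-- If `N` is finite and killed by `𝔞`, then `Hom(N, M)` is artinian whenever the
`𝔞`-torsion of `M` is artinian. -/
lemma hom_artinian_of_ann {R : Type u} [CommRing R] (𝔞 : Ideal R)
    (M : Type u) [AddCommGroup M] [Module R M]
    (hT : IsArtinian R (Submodule.torsionBySet R M (𝔞 : Set R)))
    (N : Type u) [AddCommGroup N] [Module R N] [Module.Finite R N]
    (hann : ∀ a ∈ 𝔞, ∀ x : N, a • x = 0) :
    IsArtinian R (N →ₗ[R] M) := by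
  set T := Submodule.torsionBySet R M (𝔞 : Set R) with hTdef
  let e : (N →ₗ[R] M) →ₗ[R] (N →ₗ[R] T) :=
    { toFun := fun φ => φ.codRestrict T (fun x => (Submodule.mem_torsionBySet_iff _ _).mpr
        fun a => by rw [← φ.map_smul, hann a a.2 x, φ.map_zero])
      map_add' := fun _ _ => rfl
      map_smul' := fun _ _ => rfl }
  have he : Function.Injective e := by
    intro φ ψ hφψ
    ext x
    exact congrArg Subtype.val (LinearMap.congr_fun hφψ x)
  obtain ⟨k, f, hf⟩ := Module.Finite.exists_fin' R N
  have hlc : Function.Injective (LinearMap.lcomp R (T : Submodule R M) f) := by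
    intro φ ψ hφψ
    ext x
    obtain ⟨y, rfl⟩ := hf x
    exact congrArg Subtype.val (LinearMap.congr_fun hφψ y)
  have hcomp : Function.Injective ((LinearMap.lcomp R (T : Submodule R M) f).comp e) := by
    rw [LinearMap.coe_comp]
    exact hlc.comp he
  haveI : IsArtinian R ((Fin k → R) →ₗ[R] T) :=
    isArtinian_of_linearEquiv (LinearEquiv.piRing R (T : Submodule R M) (Fin k) R).symm
  exact isArtinian_of_injective _ hcomp

theorem hom_artinian_of_hom_quotient_artinian
    {R : Type u} [CommRing R] [IsNoetherianRing R] (𝔞 : Ideal R)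
    (M : Type u) [AddCommGroup M] [Module R M]
    (h : IsArtinian R ((R ⧸ 𝔞) →ₗ[R] M)) :
    ∀ (N : Type u) [AddCommGroup N] [Module R N], Module.Finite R N →
      Module.support R N ⊆ PrimeSpectrum.zeroLocus (𝔞 : Set R) →
      IsArtinian R (N →ₗ[R] M) := by
  have hT := torsionBySet_artinian 𝔞 M h
  suffices H : ∀ n : ℕ, ∀ (N : Type u) [AddCommGroup N] [Module R N], Module.Finite R N →
      𝔞 ^ n ≤ Module.annihilator R N → IsArtinian R (N →ₗ[R] M) by
    intro N _ _ hfin hsupp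
    haveI := hfin
    rw [Module.support_eq_zeroLocus] at hsupp
    have hrad : 𝔞 ≤ (Module.annihilator R N).radical :=
      (PrimeSpectrum.zeroLocus_subset_zeroLocus_iff _ _).mp hsupp
    obtain ⟨n, hn⟩ := Ideal.exists_pow_le_of_le_radical_of_fg hrad (IsNoetherian.noetherian 𝔞)
    exact H n N hfin hn
  intro n
  induction n with
  | zero =>
    intro N _ _ _ hann
    have h1 : (1 : R) ∈ Module.annihilator R N := hann (by simp)
    have hsub : Subsingleton N :=
      ⟨fun a b => by
        have ha := Module.mem_annihilator.mp h1 a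
        have hb := Module.mem_annihilator.mp h1 b
        rw [one_smul] at ha hb
        rw [ha, hb]⟩
    have : Subsingleton (N →ₗ[R] M) :=
      ⟨fun φ ψ => by
        ext x
        rw [Subsingleton.elim x 0, φ.map_zero, ψ.map_zero]⟩
    infer_instance
  | succ n ih =>
    intro N _ _ hfin hann
    haveI := hfin
    haveI : IsNoetherian R N := inferInstance
    set K : Submodule R N := 𝔞 • ⊤ with hKdef
    haveI : Module.Finite R K := Module.Finite.iff_fg.mpr (IsNoetherian.noetherian K)
    -- induction hypothesis applies to K
    have hKann : 𝔞 ^ n ≤ Module.annihilator R K := by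
      intro a ha
      have hz : ∀ x ∈ (𝔞 • ⊤ : Submodule R N), a • x = (0 : N) := by
        intro x hx
        refine Submodule.smul_induction_on hx (fun b hb y _ => ?_)
          (fun y z hy hz => by rw [smul_add, hy, hz, add_zero])
        rw [smul_smul]
        exact Module.mem_annihilator.mp (hann (by
          rw [pow_succ]; exact Ideal.mul_mem_mul ha hb)) y
      rw [Module.mem_annihilator]
      rintro ⟨x, hx⟩
      exact Subtype.ext (by simpa using hz x hx)
    haveI hKart : IsArtinian R (K →ₗ[R] M) :=
      ih K (Module.Finite.iff_fg.mpr (IsNoetherian.noetherian K)) hKann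
    -- quotient is killed by 𝔞
    have hQart : IsArtinian R ((N ⧸ K) →ₗ[R] M) := by
      refine hom_artinian_of_ann 𝔞 M hT (N ⧸ K) (fun a ha x => ?_)
      obtain ⟨y, rfl⟩ := Submodule.Quotient.mk_surjective K x
      rw [← Submodule.Quotient.mk_smul, Submodule.Quotient.mk_eq_zero]
      exact Submodule.smul_mem_smul ha Submodule.mem_top
    -- exact sequence Hom(N/K, M) → Hom(N, M) → Hom(K, M)
    refine isArtinian_of_range_eq_ker (LinearMap.lcomp R M K.mkQ)
      (LinearMap.lcomp R M K.subtype) ?_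
    ext φ
    simp only [LinearMap.mem_range, LinearMap.mem_ker]
    constructor
    · rintro ⟨ψ, rfl⟩
      ext x
      have hx0 : (Submodule.Quotient.mk (x : N) : N ⧸ K) = 0 :=
        (Submodule.Quotient.mk_eq_zero K).mpr x.2
      simp [hx0]
    · intro hφ
      have hker : K ≤ LinearMap.ker φ := fun x hx => by
        simpa using LinearMap.congr_fun hφ ⟨x, hx⟩
      refine ⟨K.liftQ φ hker, ?_⟩
      rw [LinearMap.lcomp_apply', Submodule.liftQ_mkQ]
end

section
/- Let 𝔞 be an ideal of a commutative noetherian ring R and f : M → N a homomorphism of R-modules. If the R-modules Hom_R(R/𝔞, M), Ext^1_R(R/𝔞, M) and Hom_R(R/𝔞, N) are artinian, then Hom_R(R/𝔞, ker f) and Ext^1_R(R/𝔞, ker f) are artinian. -/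
/-!
Apply `Hom(R/𝔞, -)` to `0 → ker f → M → range f → 0`. Then `Hom(R/𝔞, ker f)` embeds
into `Hom(R/𝔞, M)`, and the long exact sequence of `Ext` (computed on a projective
resolution `P` of `R/𝔞`, where `Hom(P, -)` is exact degreewise) makes
`Hom(R/𝔞, range f) → Ext¹(R/𝔞, ker f) → Ext¹(R/𝔞, M)` exact. The left term embeds into
`Hom(R/𝔞, N)`, and artinian modules are closed under submodules, quotients and
extensions.
-/

open CategoryTheory Opposite Limits

universe u

namespace ChainComplex

variable {C : Type*} [Category C] [Abelian C] {α : Type*} [AddRightCancelSemigroup α] [One α]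

noncomputable def linearYonedaObjMap (P : ChainComplex C α) (R : Type*) [Ring R] [Linear R C]
    {Y Z : C} (φ : Y ⟶ Z) : P.linearYonedaObj R Y ⟶ P.linearYonedaObj R Z where
  f i := ModuleCat.ofHom (Linear.rightComp R _ φ)
  comm' i j _ := by
    ext g
    exact (Category.assoc _ _ _).symm

noncomputable abbrev linearYonedaObjShortComplex (P : ChainComplex C α) (R : Type*) [Ring R]
    [Linear R C] (S : ShortComplex C) : ShortComplex (CochainComplex (ModuleCat R) α) where
  f := P.linearYonedaObjMap R S.f
  g := P.linearYonedaObjMap R S.g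
  zero := by
    ext i (g : P.X i ⟶ S.X₁)
    change (g ≫ S.f) ≫ S.g = 0
    simp

lemma shortExact_linearYonedaObjShortComplex (P : ChainComplex C α) [∀ i, Projective (P.X i)]
    (R : Type*) [Ring R] [Linear R C] {S : ShortComplex C} (hS : S.ShortExact) :
    (P.linearYonedaObjShortComplex R S).ShortExact := by
  refine HomologicalComplex.shortExact_of_degreewise_shortExact _ fun i => ?_
  have := hS.mono_f
  have := hS.epi_g
  refine ModuleCat.shortComplex_shortExact _ (fun g => ?_) (fun g g' h => ?_) (fun g => ?_)
  · change g ≫ S.g = 0 ↔ ∃ k, k ≫ S.f = g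
    refine ⟨fun hg => ⟨hS.exact.lift g hg, hS.exact.lift_f g hg⟩, ?_⟩
    rintro ⟨k, rfl⟩
    rw [Category.assoc, S.zero, comp_zero]
  · exact (cancel_mono S.f).1 h
  · exact ⟨Projective.factorThru g S.g, Projective.factorThru_comp _ _⟩

end ChainComplex

namespace CategoryTheory.ProjectiveResolution

variable {C : Type*} [Category C] [Abelian C] (R : Type*) [Ring R] [Linear R C] {X : C}
  (P : ProjectiveResolution X) (Y : C)

noncomputable def homToCyclesZero :
    ModuleCat.of R (X ⟶ Y) ⟶ (P.complex.linearYonedaObj R Y).cycles 0 :=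
  (P.complex.linearYonedaObj R Y).liftCycles (ModuleCat.ofHom (Linear.leftComp R Y (P.π.f 0))) 1
    (by simp) (by ext g; exact (P.complex_d_comp_π_f_zero_assoc g).trans zero_comp)

lemma surjective_homToCyclesZero : Function.Surjective (P.homToCyclesZero R Y).hom := by
  set K := P.complex.linearYonedaObj R Y
  intro z
  let g : P.complex.X 0 ⟶ Y := K.iCycles 0 z
  have hg : P.complex.d 1 0 ≫ g = 0 := ConcreteCategory.congr_hom (K.iCycles_d 0 1) z
  refine ⟨P.exact₀.desc g hg, (ModuleCat.mono_iff_injective (K.iCycles 0)).1 inferInstance ?_⟩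
  exact (ConcreteCategory.congr_hom (K.liftCycles_i _ _ _ _) _).trans (P.exact₀.g_desc g hg)

end CategoryTheory.ProjectiveResolution

section Ext

variable {R : Type*} [Ring R] {C : Type*} [Category C] [Abelian C] [Linear R C]
  [EnoughProjectives C]

lemma isArtinian_ext_zero (X Y : C) [IsArtinian R (X ⟶ Y)] :
    IsArtinian R (((Ext R C 0).obj (op X)).obj Y) := by
  let P := ProjectiveResolution.of X
  let K := P.complex.linearYonedaObj R Y
  have : IsArtinian R (K.cycles 0) :=
    isArtinian_of_surjective _ _ (P.surjective_homToCyclesZero R Y)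
  exact isArtinian_of_linearEquiv (K.isoHomologyπ₀ ≪≫ (P.isoExt 0 Y).symm).toLinearEquiv

lemma CategoryTheory.ShortComplex.ShortExact.isArtinian_ext_succ_X₁ {S : ShortComplex C}
    (hS : S.ShortExact) (X : C) (n : ℕ)
    [IsArtinian R (((Ext R C n).obj (Opposite.op X)).obj S.X₃)]
    [IsArtinian R (((Ext R C (n + 1)).obj (Opposite.op X)).obj S.X₂)] :
    IsArtinian R (((Ext R C (n + 1)).obj (Opposite.op X)).obj S.X₁) := by
  let P := ProjectiveResolution.of X
  have hP := P.complex.shortExact_linearYonedaObjShortComplex R hS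
  have : IsArtinian R ((P.complex.linearYonedaObj R S.X₃).homology n) :=
    isArtinian_of_linearEquiv (P.isoExt n _).toLinearEquiv
  have : IsArtinian R ((P.complex.linearYonedaObj R S.X₂).homology (n + 1)) :=
    isArtinian_of_linearEquiv (P.isoExt (n + 1) _).toLinearEquiv
  have : IsArtinian R ((P.complex.linearYonedaObj R S.X₁).homology (n + 1)) :=
    isArtinian_of_range_eq_ker _ _ (hP.homology_exact₁ n (n + 1) rfl).moduleCat_range_eq_ker
  exact isArtinian_of_linearEquiv (P.isoExt (n + 1) _).symm.toLinearEquiv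

end Ext

lemma isArtinian_linearMap_of_injective {R A K M : Type*} [CommRing R] [AddCommGroup A]
    [Module R A] [AddCommGroup K] [Module R K] [AddCommGroup M] [Module R M] {g : K →ₗ[R] M}
    (hg : Function.Injective g) [IsArtinian R (A →ₗ[R] M)] : IsArtinian R (A →ₗ[R] K) :=
  isArtinian_of_injective (LinearMap.llcomp R A K M g) fun _ _ h =>
    LinearMap.ext fun x => hg (LinearMap.congr_fun h x)

theorem hom_ext_ker_artinian_general
    {R : Type u} [CommRing R] (𝔞 : Ideal R)
    {M N : Type u} [AddCommGroup M] [Module R M] [AddCommGroup N] [Module R N]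
    (f : M →ₗ[R] N)
    (hM0 : IsArtinian R ((R ⧸ 𝔞) →ₗ[R] M))
    (hM1 : IsArtinian R (((Ext R (ModuleCat.{u} R) 1).obj
      (op (ModuleCat.of R (R ⧸ 𝔞)))).obj (ModuleCat.of R M)))
    (hN0 : IsArtinian R ((R ⧸ 𝔞) →ₗ[R] N)) :
    IsArtinian R ((R ⧸ 𝔞) →ₗ[R] (LinearMap.ker f)) ∧
    IsArtinian R (((Ext R (ModuleCat.{u} R) 1).obj
      (op (ModuleCat.of R (R ⧸ 𝔞)))).obj (ModuleCat.of R (LinearMap.ker f))) := by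
  refine ⟨isArtinian_linearMap_of_injective (LinearMap.ker f).injective_subtype, ?_⟩
  have : IsArtinian R ((R ⧸ 𝔞) →ₗ[R] LinearMap.range f) :=
    isArtinian_linearMap_of_injective (LinearMap.range f).injective_subtype
  have : IsArtinian R (ModuleCat.of R (R ⧸ 𝔞) ⟶ ModuleCat.of R (LinearMap.range f)) :=
    isArtinian_of_linearEquiv ModuleCat.homLinearEquiv.symm
  have := isArtinian_ext_zero (R := R) (ModuleCat.of R (R ⧸ 𝔞))
    (ModuleCat.of R (LinearMap.range f))
  rw [← LinearMap.ker_rangeRestrict]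
  exact (LinearMap.shortExact_shortComplexKer f.surjective_rangeRestrict).isArtinian_ext_succ_X₁
    _ 0

theorem hom_ext_ker_artinian
    {R : Type u} [CommRing R] [IsNoetherianRing R] (𝔞 : Ideal R)
    {M N : Type u} [AddCommGroup M] [Module R M] [AddCommGroup N] [Module R N]
    (f : M →ₗ[R] N)
    (hM0 : IsArtinian R ((R ⧸ 𝔞) →ₗ[R] M))
    (hM1 : IsArtinian R (((Ext R (ModuleCat.{u} R) 1).obj
      (op (ModuleCat.of R (R ⧸ 𝔞)))).obj (ModuleCat.of R M)))
    (hN0 : IsArtinian R ((R ⧸ 𝔞) →ₗ[R] N)) :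
    IsArtinian R ((R ⧸ 𝔞) →ₗ[R] (LinearMap.ker f)) ∧
    IsArtinian R (((Ext R (ModuleCat.{u} R) 1).obj
      (op (ModuleCat.of R (R ⧸ 𝔞)))).obj (ModuleCat.of R (LinearMap.ker f))) :=
  hom_ext_ker_artinian_general 𝔞 f hM0 hM1 hN0
end

section
/- Let 𝔞 be an ideal of a commutative noetherian ring R and M an artinian R-module. Then the 𝔞-adic completion Λ^𝔞(M) = lim_t M/𝔞^t M is an artinian R-module. -/
/-!
STATEMENT 12: Let 𝔞 be an ideal of a commutative noetherian ring R and M an artinian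
R-module. Then the 𝔞-adic completion Λ^𝔞(M) = lim_t M/𝔞^t M is an artinian R-module.
-/

universe u v

theorem adicCompletion_artinian
    {R : Type u} [CommRing R] [IsNoetherianRing R] (𝔞 : Ideal R)
    (M : Type v) [AddCommGroup M] [Module R M] [IsArtinian R M] :
    IsArtinian R (AdicCompletion 𝔞 M) := by
  -- The descending chain 𝔞^n • ⊤ stabilizes at some n₀.
  obtain ⟨n₀, hn₀⟩ := IsArtinian.monotone_stabilizes (R := R) (M := M)
    ⟨fun n => OrderDual.toDual (𝔞 ^ n • ⊤ : Submodule R M),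
      fun m n hmn => Submodule.smul_mono (Ideal.pow_le_pow_right hmn) le_rfl⟩
  -- eval at n₀ is injective
  have hinj : Function.Injective (AdicCompletion.eval 𝔞 M n₀) := by
    rw [← LinearMap.ker_eq_bot]
    rw [Submodule.eq_bot_iff]
    intro x hx
    have hx0 : x.val n₀ = 0 := hx
    apply Subtype.ext
    funext n
    rcases le_total n n₀ with h | h
    · have := x.property h
      rw [hx0, map_zero] at this
      simpa using this.symm
    · -- 𝔞^n • ⊤ = 𝔞^n₀ • ⊤
      have heq : (𝔞 ^ n • ⊤ : Submodule R M) = (𝔞 ^ n₀ • ⊤ : Submodule R M) :=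
        (hn₀ n h).symm
      obtain ⟨y, hy⟩ := Submodule.mkQ_surjective (𝔞 ^ n • ⊤ : Submodule R M) (x.val n)
      have h1 : AdicCompletion.transitionMap 𝔞 M h (Submodule.mkQ _ y) = x.val n₀ := by
        rw [hy]; exact x.property h
      rw [hx0] at h1
      have h2 : Submodule.mkQ (𝔞 ^ n₀ • ⊤ : Submodule R M) y = 0 := h1
      have h3 : y ∈ (𝔞 ^ n₀ • ⊤ : Submodule R M) := by
        rwa [← Submodule.Quotient.mk_eq_zero]
      have h4 : y ∈ (𝔞 ^ n • ⊤ : Submodule R M) := heq ▸ h3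
      have : Submodule.mkQ (𝔞 ^ n • ⊤ : Submodule R M) y = 0 := by
        rwa [← Submodule.Quotient.mk_eq_zero] at h4
      rw [← hy]; exact this
  exact isArtinian_of_injective _ hinj
end
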